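/- Lemma 3.2(g), uniform mesh: for every α ∈ (0,1) and the uniform partition t_j = jτ with step size τ = T/N, for every 2 ≤ n ≤ N one has P^{n,n}_α / P^{n,n−1}_α = 1/(2 − 2^{1−α}), i.e. (2 − 2^{1−α}) · P^{n,n}_α = P^{n,n−1}_α. -/

import Mathlib

open Finset

/-- The kernel `k_β(s) = s^(β-1)/Γ(β)`. -/
noncomputable def kker (β s : ℝ) : ℝ := s ^ (β - 1) / Real.Gamma β

/-- The discrete L1 kernels `K^{n,j}_{1-α}`. -/
noncomputable def Kd (α : ℝ) (t : ℕ → ℝ) (n j : ℕ) : ℝ :=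
  (kker (2 - α) (t n - t (j - 1)) - kker (2 - α) (t n - t j)) / (t j - t (j - 1))

/-- The complementary discrete kernels `P^{n,i}_α`, defined by downward recursion. -/
noncomputable def Pd (α : ℝ) (t : ℕ → ℝ) (n i : ℕ) : ℝ :=
  if i = n then 1 / Kd α t n n
  else (1 / Kd α t i i) *
    ∑ j ∈ (Finset.Ioc i n).attach,
      Pd α t n j.1 * (Kd α t j.1 (i + 1) - Kd α t j.1 i)
termination_by n - i
decreasing_by
  have h := Finset.mem_Ioc.mp j.2
  omega

/-!
On the uniform mesh `t_j = jτ` the L1 kernels are Toeplitz,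
`K^{n,j}_{1-α} = c · ((n-j+1)^{1-α} - (n-j)^{1-α})` with `c = τ^{-α}/Γ(2-α)`, so
`K^{n,n} = K^{n-1,n-1} = c` and `K^{n,n-1} = (2^{1-α} - 1) c`. The recursion for `P^{n,n-1}` has a
single term, `P^{n,n-1} = P^{n,n} (K^{n,n} - K^{n,n-1}) / K^{n-1,n-1}`, which is therefore
`(2 - 2^{1-α}) P^{n,n}`.
-/

section ComplementaryKernel

variable (α : ℝ) (t : ℕ → ℝ)

theorem Pd_self (n : ℕ) : Pd α t n n = (Kd α t n n)⁻¹ := by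
  rw [Pd, if_pos rfl, one_div]

theorem Pd_succ_self (m : ℕ) :
    Pd α t (m + 1) m = (Kd α t m m)⁻¹ *
      (Pd α t (m + 1) (m + 1) * (Kd α t (m + 1) (m + 1) - Kd α t (m + 1) m)) := by
  rw [Pd, if_neg (Nat.ne_of_lt m.lt_succ_self), one_div,
    sum_attach (Ioc m (m + 1)) fun j => Pd α t (m + 1) j * (Kd α t j (m + 1) - Kd α t j m),
    Nat.Ioc_succ_singleton, sum_singleton]

theorem Kd_eq_of_uniform {τ : ℝ} (hτ : 0 ≤ τ) (ht : ∀ j, t j = j * τ) {n j : ℕ}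
    (hj : 1 ≤ j) (hjn : j ≤ n) :
    Kd α t n j = ((n - j + 1 : ℝ) ^ (1 - α) - (n - j : ℝ) ^ (1 - α)) *
      (τ ^ (1 - α) / Real.Gamma (2 - α) / τ) := by
  have hnj : (0 : ℝ) ≤ n - j := sub_nonneg.2 (by exact_mod_cast hjn)
  simp only [Kd, kker, ht, Nat.cast_sub hj, Nat.cast_one]
  rw [show (n : ℝ) * τ - (j - 1) * τ = (n - j + 1) * τ by ring,
    show (n : ℝ) * τ - j * τ = (n - j) * τ by ring,
    show (j : ℝ) * τ - (j - 1) * τ = τ by ring, show (2 : ℝ) - α - 1 = 1 - α by ring,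
    Real.mul_rpow (by linarith) hτ, Real.mul_rpow hnj hτ]
  ring

end ComplementaryKernel

theorem complementary_kernel_ratio_uniform_general
    (α T : ℝ) (N : ℕ) (t : ℕ → ℝ)
    (hα1 : α < 1) (hT : 0 < T)
    (ht : ∀ j, t j = (j : ℝ) * (T / (N : ℝ))) :
    ∀ n, 2 ≤ n → n ≤ N →
      (2 - (2 : ℝ) ^ ((1 : ℝ) - α)) * Pd α t n n = Pd α t n (n - 1) := by
  rintro n hn -
  obtain ⟨m, rfl⟩ : ∃ m, n = m + 1 := ⟨n - 1, by omega⟩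
  have hτ : 0 ≤ T / N := by positivity
  set c := (T / N) ^ (1 - α) / Real.Gamma (2 - α) / (T / N)
  have hdiag : ∀ k, 1 ≤ k → Kd α t k k = c := fun k hk => by
    rw [Kd_eq_of_uniform α t hτ ht hk le_rfl, sub_self, zero_add, Real.one_rpow,
      Real.zero_rpow (by linarith), sub_zero, one_mul]
  have hsub : Kd α t (m + 1) m = (2 ^ (1 - α) - 1) * c := by
    rw [Kd_eq_of_uniform α t hτ ht (by omega) (by omega)]
    push_cast
    norm_num [c]
  rw [Nat.add_sub_cancel, Pd_succ_self, Pd_self, hdiag (m + 1) le_add_self, hdiag m (by omega), hsub]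
  -- `c = 0` only for `N = 0`, where both sides are the junk value `0⁻¹ = 0`.
  rcases eq_or_ne c 0 with hc | hc
  · simp [hc]
  · field_simp
    ring

/-- Lemma 3.2(g), uniform mesh: for the uniform partition `t_j = jT/N` and `2 ≤ n ≤ N`,
`(2 - 2^{1-α}) · P^{n,n}_α = P^{n,n-1}_α`, i.e. `P^{n,n}_α / P^{n,n-1}_α = 1/(2-2^{1-α})`. -/
theorem complementary_kernel_ratio_uniform
    (α T : ℝ) (N : ℕ) (t : ℕ → ℝ)
    (hα0 : 0 < α) (hα1 : α < 1) (hT : 0 < T) (hN : 2 ≤ N)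
    (ht : ∀ j, t j = (j : ℝ) * (T / (N : ℝ))) :
    ∀ n, 2 ≤ n → n ≤ N →
      (2 - (2 : ℝ) ^ ((1 : ℝ) - α)) * Pd α t n n = Pd α t n (n - 1) :=
  complementary_kernel_ratio_uniform_general α T N t hα1 hT ht
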